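/- Let T be a closed subset of an association scheme S. Then T is a singular subset of S if and only if O^ϑ(S) ∪ O_ϑ(S) ⊆ T. -/
import Mathlib


open scoped Classical

/-- An association scheme of class `d` on a nonempty finite set `X`:
a partition of `X × X` into nonempty relations `r 0, …, r d` with
`r 0` the diagonal, closed under converse (`star`), and with
intersection numbers `pNum i j k`. -/
structure AssocScheme (X : Type*) [Fintype X] [Nonempty X] (d : ℕ) where
  r : Fin (d + 1) → Set (X × X)
  r_nonempty : ∀ i, (r i).Nonempty
  existsUnique_rel : ∀ q : X × X, ∃! i, q ∈ r i
  r_zero : r 0 = {q : X × X | q.1 = q.2}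
  star : Fin (d + 1) → Fin (d + 1)
  mem_star : ∀ (i : Fin (d + 1)) (q : X × X), q ∈ r (star i) ↔ (q.2, q.1) ∈ r i
  pNum : Fin (d + 1) → Fin (d + 1) → Fin (d + 1) → ℕ
  ncard_eq : ∀ (i j k : Fin (d + 1)), ∀ q ∈ r k,
    {z : X | (q.1, z) ∈ r i ∧ (z, q.2) ∈ r j}.ncard = pNum i j k

namespace AssocScheme

variable {X : Type*} [Fintype X] [Nonempty X] {d : ℕ}

/-- The valency `k_i = p_{i i*}^0` of the relation `R_i`. -/
def val (S : AssocScheme X d) (i : Fin (d + 1)) : ℕ := S.pNum i (S.star i) 0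

/-- The complex product `UV = {R_k : p_{uv}^k > 0 for some R_u ∈ U, R_v ∈ V}`. -/
def cmul (S : AssocScheme X d) (U V : Set (Fin (d + 1))) : Set (Fin (d + 1)) :=
  {k | ∃ u ∈ U, ∃ v ∈ V, 0 < S.pNum u v k}

/-- A nonempty subset `T` is closed if `T*T ⊆ T`. -/
def IsClosedSubset (S : AssocScheme X d) (T : Set (Fin (d + 1))) : Prop :=
  T.Nonempty ∧ S.cmul (S.star '' T) T ⊆ T

/-- The thin radical `O_ϑ(S) = {R_i : k_i = 1}`. -/
def thinRadical (S : AssocScheme X d) : Set (Fin (d + 1)) := {i | S.val i = 1}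

/-- A closed subset `T` is strongly normal if `R_{i*} T R_i ⊆ T` for all `i`. -/
def IsStronglyNormal (S : AssocScheme X d) (T : Set (Fin (d + 1))) : Prop :=
  S.IsClosedSubset T ∧ ∀ i : Fin (d + 1), S.cmul (S.cmul {S.star i} T) {i} ⊆ T

/-- The thin residue `O^ϑ(S)`: the intersection of all strongly normal closed subsets. -/
def thinResidue (S : AssocScheme X d) : Set (Fin (d + 1)) :=
  ⋂₀ {T | S.IsStronglyNormal T}

/-- `⟨H⟩`: the intersection of all closed subsets containing `H`. -/
def closure (S : AssocScheme X d) (H : Set (Fin (d + 1))) : Set (Fin (d + 1)) :=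
  ⋂₀ {T | S.IsClosedSubset T ∧ H ⊆ T}

/-- The adjacency matrix `A̅_i` of `R_i`, with entries in `𝔽`. -/
noncomputable def adj (S : AssocScheme X d) (𝔽 : Type*) [Field 𝔽] (i : Fin (d + 1)) :
    Matrix X X 𝔽 :=
  Matrix.of fun x y => if (x, y) ∈ S.r i then 1 else 0

/-- `v` spans a trivial `𝔽S`-submodule of the regular `𝔽S`-module:
`v` is a nonzero element of `𝔽S` with `A̅_i v = k̅_i v` for all `i`. -/
def IsTrivialVector (S : AssocScheme X d) (𝔽 : Type*) [Field 𝔽] (v : Matrix X X 𝔽) : Prop :=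
  v ≠ 0 ∧ v ∈ Submodule.span 𝔽 (Set.range (S.adj 𝔽)) ∧
    ∀ i : Fin (d + 1), S.adj 𝔽 i * v = (S.val i : 𝔽) • v

/-- `S` is `p`-transitive over `𝔽` (of characteristic `p`) if the regular `𝔽S`-module
contains a unique trivial `𝔽S`-submodule. -/
def IsPTransitive (S : AssocScheme X d) (𝔽 : Type*) [Field 𝔽] : Prop :=
  ∃! W : Submodule 𝔽 (Matrix X X 𝔽),
    ∃ v : Matrix X X 𝔽, S.IsTrivialVector 𝔽 v ∧ W = Submodule.span 𝔽 {v}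

/-- A subset `T ⊆ S` is singular if `O_ϑ(S) ⊆ T` and
`R_x R_{y*} R_y R_z ⊆ T` for all `R_x ∈ O_ϑ(S)`, `R_y ∈ S`, `R_z ∈ T`. -/
def IsSingular (S : AssocScheme X d) (T : Set (Fin (d + 1))) : Prop :=
  S.thinRadical ⊆ T ∧ ∀ x ∈ S.thinRadical, ∀ y : Fin (d + 1), ∀ z ∈ T,
    S.cmul (S.cmul (S.cmul {x} {S.star y}) {y}) {z} ⊆ T

/-- `S_{p'} = {R_i ∈ S : p ∤ k_i}`. -/
def pPrimePart (S : AssocScheme X d) (p : ℕ) : Set (Fin (d + 1)) :=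
  {i | ¬ p ∣ S.val i}

end AssocScheme
namespace AssocScheme

variable {X : Type*} [Fintype X] [Nonempty X] {d : ℕ} (S : AssocScheme X d)

lemma rel_eq {q : X × X} {i j : Fin (d + 1)} (hi : q ∈ S.r i) (hj : q ∈ S.r j) : i = j := by
  obtain ⟨k, -, hk⟩ := S.existsUnique_rel q
  rw [hk i hi, hk j hj]

lemma star_star (i : Fin (d + 1)) : S.star (S.star i) = i := by
  obtain ⟨⟨x, y⟩, hq⟩ := S.r_nonempty (S.star (S.star i))
  have : (x, y) ∈ S.r i := by
    have := (S.mem_star (S.star i) (x, y)).mp hq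
    exact (S.mem_star i (y, x)).mp this
  exact S.rel_eq hq this

lemma pNum_pos_iff {i j k : Fin (d + 1)} :
    0 < S.pNum i j k ↔ ∃ x y z : X, (x, y) ∈ S.r i ∧ (y, z) ∈ S.r j ∧ (x, z) ∈ S.r k := by
  constructor
  · intro h
    obtain ⟨⟨x, z⟩, hq⟩ := S.r_nonempty k
    have hn := S.ncard_eq i j k (x, z) hq
    have : ({w : X | (x, w) ∈ S.r i ∧ (w, z) ∈ S.r j}).Nonempty := by
      rw [← Set.ncard_pos (Set.toFinite _), hn]; exact h
    obtain ⟨y, hy1, hy2⟩ := this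
    exact ⟨x, y, z, hy1, hy2, hq⟩
  · rintro ⟨x, y, z, h1, h2, h3⟩
    have hn := S.ncard_eq i j k (x, z) h3
    rw [← hn, Set.ncard_pos (Set.toFinite _)]
    exact ⟨y, h1, h2⟩

lemma exists_y_of_pNum_pos {i j k : Fin (d + 1)} (h : 0 < S.pNum i j k) {x z : X}
    (hxz : (x, z) ∈ S.r k) : ∃ y, (x, y) ∈ S.r i ∧ (y, z) ∈ S.r j := by
  have hn := S.ncard_eq i j k (x, z) hxz
  have : ({w : X | (x, w) ∈ S.r i ∧ (w, z) ∈ S.r j}).Nonempty := by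
    rw [← Set.ncard_pos (Set.toFinite _), hn]; exact h
  exact this

lemma exists_rel (q : X × X) : ∃ i, q ∈ S.r i := (S.existsUnique_rel q).exists

lemma mem_cmul_iff {U V : Set (Fin (d + 1))} {k : Fin (d + 1)} :
    k ∈ S.cmul U V ↔ ∃ u ∈ U, ∃ v ∈ V, 0 < S.pNum u v k := Iff.rfl

lemma cmul_mono {U U' V V' : Set (Fin (d + 1))} (hU : U ⊆ U') (hV : V ⊆ V') :
    S.cmul U V ⊆ S.cmul U' V' := by
  rintro k ⟨u, hu, v, hv, h⟩
  exact ⟨u, hU hu, v, hV hv, h⟩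

lemma mem_cmul_of_pair {U V : Set (Fin (d + 1))} {k : Fin (d + 1)} {x z : X}
    (hxz : (x, z) ∈ S.r k) :
    k ∈ S.cmul U V ↔ ∃ y u v, u ∈ U ∧ v ∈ V ∧ (x, y) ∈ S.r u ∧ (y, z) ∈ S.r v := by
  constructor
  · rintro ⟨u, hu, v, hv, h⟩
    obtain ⟨y, h1, h2⟩ := S.exists_y_of_pNum_pos h hxz
    exact ⟨y, u, v, hu, hv, h1, h2⟩
  · rintro ⟨y, u, v, hu, hv, h1, h2⟩
    exact ⟨u, hu, v, hv, S.pNum_pos_iff.mpr ⟨x, y, z, h1, h2, hxz⟩⟩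

lemma cmul_assoc (U V W : Set (Fin (d + 1))) :
    S.cmul (S.cmul U V) W = S.cmul U (S.cmul V W) := by
  ext k
  obtain ⟨⟨x, z⟩, hq⟩ := S.r_nonempty k
  rw [S.mem_cmul_of_pair hq, S.mem_cmul_of_pair hq]
  constructor
  · rintro ⟨y, m, w, hm, hw, h1, h2⟩
    rw [S.mem_cmul_of_pair h1] at hm
    obtain ⟨t, u, v, hu, hv, h3, h4⟩ := hm
    obtain ⟨n, hn⟩ := S.exists_rel (t, z)
    refine ⟨t, u, n, hu, ?_, h3, hn⟩
    exact ⟨v, hv, w, hw, S.pNum_pos_iff.mpr ⟨t, y, z, h4, h2, hn⟩⟩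
  · rintro ⟨y, u, m, hu, hm, h1, h2⟩
    rw [S.mem_cmul_of_pair h2] at hm
    obtain ⟨t, v, w, hv, hw, h3, h4⟩ := hm
    obtain ⟨n, hn⟩ := S.exists_rel (x, t)
    refine ⟨t, n, w, ?_, hw, hn, h4⟩
    exact ⟨u, hu, v, hv, S.pNum_pos_iff.mpr ⟨x, y, t, h1, h3, hn⟩⟩

lemma mem_r_zero {x y : X} : (x, y) ∈ S.r 0 ↔ x = y := by rw [S.r_zero]; rfl

lemma cmul_zero_right (U : Set (Fin (d + 1))) : S.cmul U {0} = U := by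
  ext k
  constructor
  · rintro ⟨u, hu, v, rfl, h⟩
    obtain ⟨x, y, z, h1, h2, h3⟩ := S.pNum_pos_iff.mp h
    have : y = z := S.mem_r_zero.mp h2
    subst this
    rwa [S.rel_eq h3 h1]
  · intro hk
    obtain ⟨⟨x, y⟩, hq⟩ := S.r_nonempty k
    exact ⟨k, hk, 0, rfl, S.pNum_pos_iff.mpr ⟨x, y, y, hq, S.mem_r_zero.mpr rfl, hq⟩⟩

lemma cmul_zero_left (U : Set (Fin (d + 1))) : S.cmul {0} U = U := by
  ext k
  constructor
  · rintro ⟨v, rfl, u, hu, h⟩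
    obtain ⟨x, y, z, h1, h2, h3⟩ := S.pNum_pos_iff.mp h
    have : x = y := S.mem_r_zero.mp h1
    subst this
    rwa [S.rel_eq h3 h2]
  · intro hk
    obtain ⟨⟨x, y⟩, hq⟩ := S.r_nonempty k
    exact ⟨0, rfl, k, hk, S.pNum_pos_iff.mpr ⟨x, x, y, S.mem_r_zero.mpr rfl, hq, hq⟩⟩

lemma zero_mem_cmul_star_self (i : Fin (d + 1)) : (0 : Fin (d + 1)) ∈ S.cmul {i} {S.star i} := by
  obtain ⟨⟨x, y⟩, hq⟩ := S.r_nonempty i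
  exact ⟨i, rfl, S.star i, rfl,
    S.pNum_pos_iff.mpr ⟨x, y, x, hq, (S.mem_star i (y, x)).mpr hq, S.mem_r_zero.mpr rfl⟩⟩

lemma zero_mem_cmul_self_star (i : Fin (d + 1)) : (0 : Fin (d + 1)) ∈ S.cmul {S.star i} {i} := by
  have := S.zero_mem_cmul_star_self (S.star i)
  rwa [S.star_star] at this

lemma mem_cmul_star {U V : Set (Fin (d + 1))} {k : Fin (d + 1)} (h : k ∈ S.cmul U V) :
    S.star k ∈ S.cmul (S.star '' V) (S.star '' U) := by
  obtain ⟨u, hu, v, hv, hp⟩ := h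
  obtain ⟨x, y, z, h1, h2, h3⟩ := S.pNum_pos_iff.mp hp
  refine ⟨S.star v, ⟨v, hv, rfl⟩, S.star u, ⟨u, hu, rfl⟩, S.pNum_pos_iff.mpr
    ⟨z, y, x, ?_, ?_, ?_⟩⟩
  · exact (S.mem_star v (z, y)).mpr h2
  · exact (S.mem_star u (y, x)).mpr h1
  · exact (S.mem_star k (z, x)).mpr h3

lemma star_image_cmul (U V : Set (Fin (d + 1))) :
    S.star '' (S.cmul U V) = S.cmul (S.star '' V) (S.star '' U) := by
  have himg : ∀ W : Set (Fin (d + 1)), S.star '' (S.star '' W) = W := by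
    intro W
    rw [← Set.image_comp]
    simp [Function.comp_def, S.star_star]
  ext k
  constructor
  · rintro ⟨m, hm, rfl⟩
    exact S.mem_cmul_star hm
  · intro hk
    have := S.mem_cmul_star hk
    rw [himg, himg] at this
    exact ⟨S.star k, this, S.star_star k⟩

lemma star_mem_cmul_single {a b k : Fin (d + 1)} (h : k ∈ S.cmul {a} {b}) :
    S.star k ∈ S.cmul {S.star b} {S.star a} := by
  have := S.mem_cmul_star h
  rwa [Set.image_singleton, Set.image_singleton] at this

lemma zero_mem_closed {T : Set (Fin (d + 1))} (h : S.IsClosedSubset T) : (0 : Fin (d + 1)) ∈ T := by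
  obtain ⟨⟨t, ht⟩, hsub⟩ := h
  exact hsub (S.cmul_mono (Set.singleton_subset_iff.mpr (Set.mem_image_of_mem S.star ht))
    (Set.singleton_subset_iff.mpr ht) (S.zero_mem_cmul_self_star t))

lemma star_mem_closed {T : Set (Fin (d + 1))} (h : S.IsClosedSubset T) {t : Fin (d + 1)}
    (ht : t ∈ T) : S.star t ∈ T := by
  have h0 : (0 : Fin (d + 1)) ∈ T := S.zero_mem_closed h
  have : S.star t ∈ S.cmul {S.star t} {(0 : Fin (d + 1))} := by
    rw [S.cmul_zero_right]; rfl
  exact h.2 (S.cmul_mono (Set.singleton_subset_iff.mpr (Set.mem_image_of_mem S.star ht))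
    (Set.singleton_subset_iff.mpr h0) this)

lemma cmul_self_subset {T : Set (Fin (d + 1))} (h : S.IsClosedSubset T) :
    S.cmul T T ⊆ T := by
  refine Set.Subset.trans (S.cmul_mono ?_ subset_rfl) h.2
  intro t ht
  exact ⟨S.star t, S.star_mem_closed h ht, S.star_star t⟩

lemma star_zero : S.star (0 : Fin (d + 1)) = 0 := by
  obtain ⟨⟨x, y⟩, hq⟩ := S.r_nonempty (S.star (0 : Fin (d + 1)))
  have := (S.mem_star 0 (x, y)).mp hq
  have hyx : y = x := S.mem_r_zero.mp this
  subst hyx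
  exact S.rel_eq hq (S.mem_r_zero.mpr rfl)

lemma zero_mem_thinRadical : (0 : Fin (d + 1)) ∈ S.thinRadical := by
  have x : X := Classical.arbitrary X
  have hq : ((x, x) : X × X) ∈ S.r 0 := S.mem_r_zero.mpr rfl
  have hn := S.ncard_eq 0 (S.star 0) 0 (x, x) hq
  rw [S.star_zero] at hn
  have hset : {z : X | (x, z) ∈ S.r 0 ∧ (z, x) ∈ S.r 0} = {x} := by
    ext z
    simp only [Set.mem_setOf_eq, Set.mem_singleton_iff, S.mem_r_zero]
    constructor
    · rintro ⟨rfl, -⟩; rfl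
    · rintro rfl; exact ⟨rfl, rfl⟩
  have : S.val 0 = 1 := by
    rw [val, S.star_zero, ← hn, hset, Set.ncard_singleton]
  exact this

end AssocScheme

/-- A closed subset `T` of `S` is singular iff `O^ϑ(S) ∪ O_ϑ(S) ⊆ T`. -/
theorem isSingular_iff_thinResidue_union_thinRadical_subset
    {X : Type*} [Fintype X] [Nonempty X] {d : ℕ} (S : AssocScheme X d)
    (T : Set (Fin (d + 1))) (hT : S.IsClosedSubset T) :
    S.IsSingular T ↔ S.thinResidue ∪ S.thinRadical ⊆ T := by
  constructor
  · -- singular → thin residue and thin radical contained in T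
    intro hsing k hk
    rcases hk with hk | hk
    · -- k ∈ thinResidue
      set H : Set (Fin (d + 1)) := ⋃ y, S.cmul {S.star y} {y} with hHdef
      have hHT : H ⊆ T := by
        refine Set.iUnion_subset fun y => ?_
        have h := hsing.2 0 S.zero_mem_thinRadical y 0 (S.zero_mem_closed hT)
        rwa [S.cmul_zero_left, S.cmul_zero_right] at h
      have hTfam : T ∈ {T' | S.IsClosedSubset T' ∧ H ⊆ T'} := ⟨hT, hHT⟩
      set N : Set (Fin (d + 1)) := S.closure H with hNdef
      have hNT : N ⊆ T := Set.sInter_subset_of_mem hTfam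
      have hNmem : ∀ {a : Fin (d + 1)},
          a ∈ N ↔ ∀ T' ∈ {T' | S.IsClosedSubset T' ∧ H ⊆ T'}, a ∈ T' :=
        fun {a} => Set.mem_sInter
      have hNclosed : S.IsClosedSubset N := by
        constructor
        · exact ⟨0, hNmem.mpr fun T' hT' => S.zero_mem_closed hT'.1⟩
        · intro m hm
          refine hNmem.mpr fun T' hT' => ?_
          have hsubN : N ⊆ T' := Set.sInter_subset_of_mem hT'
          exact hT'.1.2 (S.cmul_mono (Set.image_mono hsubN) hsubN hm)
      have hHN : H ⊆ N := fun a ha => hNmem.mpr fun T' hT' => hT'.2 ha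
      have hNN : S.cmul N N ⊆ N := S.cmul_self_subset hNclosed
      have hgenN : ∀ u : Fin (d + 1), S.cmul {S.star u} {u} ⊆ N :=
        fun u => (Set.subset_iUnion (fun y => S.cmul {S.star y} {y}) u).trans hHN
      -- key lemma: u, v ∈ y·i implies u* v ⊆ N
      have key : ∀ i y u v : Fin (d + 1), u ∈ S.cmul {y} {i} → v ∈ S.cmul {y} {i} →
          S.cmul {S.star u} {v} ⊆ N := by
        intro i y u v hu hv
        have hy : y ∈ S.cmul {u} {S.star i} := by
          obtain ⟨a, ha, b, hb, hp⟩ := hu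
          rw [Set.eq_of_mem_singleton ha, Set.eq_of_mem_singleton hb] at hp
          obtain ⟨x, w, z, h1, h2, h3⟩ := S.pNum_pos_iff.mp hp
          exact ⟨u, rfl, S.star i, rfl,
            S.pNum_pos_iff.mpr ⟨x, z, w, h3, (S.mem_star i (z, w)).mpr h2, h1⟩⟩
        calc S.cmul {S.star u} {v}
            ⊆ S.cmul {S.star u} (S.cmul {y} {i}) :=
              S.cmul_mono subset_rfl (Set.singleton_subset_iff.mpr hv)
          _ = S.cmul (S.cmul {S.star u} {y}) {i} := (S.cmul_assoc _ _ _).symm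
          _ ⊆ S.cmul (S.cmul {S.star u} (S.cmul {u} {S.star i})) {i} :=
              S.cmul_mono (S.cmul_mono subset_rfl (Set.singleton_subset_iff.mpr hy)) subset_rfl
          _ = S.cmul (S.cmul {S.star u} {u}) (S.cmul {S.star i} {i}) := by
              simp only [S.cmul_assoc]
          _ ⊆ S.cmul N N := S.cmul_mono (hgenN u) (hgenN i)
          _ ⊆ N := hNN
      set M : Set (Fin (d + 1)) :=
        {t | ∀ i, S.cmul (S.cmul {S.star i} {t}) {i} ⊆ N} with hMdef
      have hHsubM : H ⊆ M := by
        intro t ht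
        obtain ⟨y, hty⟩ := Set.mem_iUnion.mp ht
        refine Set.mem_setOf_eq ▸ fun i => ?_
        calc S.cmul (S.cmul {S.star i} {t}) {i}
            ⊆ S.cmul (S.cmul {S.star i} (S.cmul {S.star y} {y})) {i} :=
              S.cmul_mono (S.cmul_mono subset_rfl (Set.singleton_subset_iff.mpr hty)) subset_rfl
          _ = S.cmul (S.cmul {S.star i} {S.star y}) (S.cmul {y} {i}) := by
              simp only [S.cmul_assoc]
          _ ⊆ N := by
              rintro k ⟨p, hp, a, ha, hpos⟩
              have hpA : S.star p ∈ S.cmul {y} {i} := by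
                have h1 := S.star_mem_cmul_single hp
                rwa [S.star_star, S.star_star] at h1
              have h2 := key i y (S.star p) a hpA ha
              rw [S.star_star] at h2
              exact h2 ⟨p, rfl, a, rfl, hpos⟩
      have hMclosed : S.IsClosedSubset M := by
        constructor
        · refine ⟨0, Set.mem_setOf_eq ▸ fun i => ?_⟩
          rw [S.cmul_zero_right]
          exact hgenN i
        · rintro k ⟨p, ⟨t1, ht1, rfl⟩, t2, ht2, hpos⟩
          have ht1' : ∀ i, S.cmul (S.cmul {S.star i} {t1}) {i} ⊆ N := ht1
          have ht2' : ∀ i, S.cmul (S.cmul {S.star i} {t2}) {i} ⊆ N := ht2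
          refine Set.mem_setOf_eq ▸ fun i => ?_
          have hB1 : S.cmul (S.cmul {S.star i} {S.star t1}) {i} ⊆ N := by
            intro v hv
            have h1 := S.mem_cmul_star hv
            rw [S.star_image_cmul, Set.image_singleton, Set.image_singleton,
              Set.image_singleton, S.star_star, S.star_star] at h1
            rw [← S.cmul_assoc] at h1
            have h2 : S.star v ∈ N := ht1' i h1
            have h3 := S.star_mem_closed hNclosed h2
            rwa [S.star_star] at h3
          have hk' : ({k} : Set (Fin (d + 1))) ⊆ S.cmul {S.star t1} {t2} :=
            Set.singleton_subset_iff.mpr ⟨S.star t1, rfl, t2, rfl, hpos⟩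
          have hins : S.cmul {S.star t1} {t2} ⊆
              S.cmul (S.cmul {S.star t1} (S.cmul {i} {S.star i})) {t2} := by
            have h0 : S.cmul {S.star t1} {t2}
                = S.cmul (S.cmul {S.star t1} {(0 : Fin (d + 1))}) {t2} := by
              rw [S.cmul_zero_right]
            rw [h0]
            exact S.cmul_mono (S.cmul_mono subset_rfl
              (Set.singleton_subset_iff.mpr (S.zero_mem_cmul_star_self i))) subset_rfl
          calc S.cmul (S.cmul {S.star i} {k}) {i}
              ⊆ S.cmul (S.cmul {S.star i}
                  (S.cmul (S.cmul {S.star t1} (S.cmul {i} {S.star i})) {t2})) {i} :=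
                S.cmul_mono (S.cmul_mono subset_rfl (hk'.trans hins)) subset_rfl
            _ = S.cmul (S.cmul (S.cmul {S.star i} {S.star t1}) {i})
                  (S.cmul (S.cmul {S.star i} {t2}) {i}) := by
                simp only [S.cmul_assoc]
            _ ⊆ S.cmul N N := S.cmul_mono hB1 (ht2' i)
            _ ⊆ N := hNN
      have hNM : N ⊆ M := Set.sInter_subset_of_mem ⟨hMclosed, hHsubM⟩
      have hSN : S.IsStronglyNormal N := by
        refine ⟨hNclosed, fun i => ?_⟩
        rintro k ⟨m, hm, a, ha, hpos⟩
        obtain ⟨u, hu, t, htN, hpos2⟩ := hm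
        have htM : ∀ j, S.cmul (S.cmul {S.star j} {t}) {j} ⊆ N := hNM htN
        exact htM i ⟨m, ⟨u, hu, t, rfl, hpos2⟩, a, ha, hpos⟩
      exact hNT (Set.sInter_subset_of_mem hSN hk)
    · exact hsing.1 hk
  · -- containment → singular
    intro hsub
    refine ⟨fun i hi => hsub (Set.mem_union_right _ hi), ?_⟩
    intro x hx y z hz
    have hxT : x ∈ T := hsub (Set.mem_union_right _ hx)
    have hyy : S.cmul {S.star y} {y} ⊆ T := by
      refine Set.Subset.trans ?_ fun a ha => hsub (Set.mem_union_left _ ha)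
      intro k hk
      refine Set.mem_sInter.mpr fun N hN => ?_
      have h0 : (0 : Fin (d + 1)) ∈ N := S.zero_mem_closed hN.1
      refine hN.2 y ?_
      have hstep : S.cmul {S.star y} {y} ⊆ S.cmul (S.cmul {S.star y} N) {y} := by
        refine S.cmul_mono ?_ subset_rfl
        intro a ha
        have haeq := Set.eq_of_mem_singleton ha
        subst haeq
        have h1 : S.star y ∈ S.cmul {S.star y} {(0 : Fin (d + 1))} := by
          rw [S.cmul_zero_right]; exact rfl
        exact S.cmul_mono subset_rfl (Set.singleton_subset_iff.mpr h0) h1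
      exact hstep hk
    calc S.cmul (S.cmul (S.cmul {x} {S.star y}) {y}) {z}
        = S.cmul (S.cmul {x} (S.cmul {S.star y} {y})) {z} := by
          simp only [S.cmul_assoc]
      _ ⊆ S.cmul (S.cmul T T) T :=
          S.cmul_mono (S.cmul_mono (Set.singleton_subset_iff.mpr hxT) hyy)
            (Set.singleton_subset_iff.mpr hz)
      _ ⊆ S.cmul T T := S.cmul_mono (S.cmul_self_subset hT) subset_rfl
      _ ⊆ T := S.cmul_self_subset hT
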